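/- Under the setting of the mixed SAM/ERM full-batch descent (f β-smooth, ρ < 1/(2β), η < 1/β, w_{t+1} = w_t - η((1-ξ_t)∇f(w_t) + ξ_t ∇f(w_t + ρ∇f(w_t)))), we have min_{0≤t≤T-1} ||∇f(w_t)||² ≤ (f(w_0) - f(w_T)) / (Tη(1 - βη/2 - βρζ)), where ζ = (1/T)Σ_{t=0}^{T-1} ξ_t. -/

import Mathlib

/-!
With a `β`-Lipschitz gradient, `f` lies below its quadratic model
`f x + ⟪∇f x, y - x⟫ + β/2‖y - x‖²`. An ERM step therefore decreases `f` by at least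
`η(1 - βη/2)‖∇f(w_t)‖²`, and a SAM step, whose gradient differs from `∇f(w_t)` by at most
`βρ‖∇f(w_t)‖`, by at least `η(1 - βη/2 - βρ)‖∇f(w_t)‖²`. Summing, the decreases telescope to
`f(w_0) - f(w_T)`, and the minimum of `‖∇f(w_t)‖²` is at most their weighted average.
-/

open RealInnerProductSpace Finset

section Smooth

variable {E : Type*} [NormedAddCommGroup E] [InnerProductSpace ℝ E] [CompleteSpace E]
  {f : E → ℝ} {f' : E → E} {β : ℝ}

theorem HasGradientAt.hasDerivAt_comp_add_smul {g x v : E} {t : ℝ}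
    (h : HasGradientAt f g (x + t • v)) :
    HasDerivAt (fun s : ℝ => f (x + s • v)) ⟪g, v⟫ t := by
  have hline : HasDerivAt (fun s : ℝ => x + s • v) v t := by
    simpa using ((hasDerivAt_id t).smul_const v).const_add x
  have hcomp := h.hasFDerivAt.comp_hasDerivAt t hline
  simp only [InnerProductSpace.toDual_apply_apply] at hcomp
  exact hcomp

theorem le_add_inner_add_sq_of_lipschitz_gradient (hgrad : ∀ w, HasGradientAt f (f' w) w)
    (hlip : ∀ w v, ‖f' w - f' v‖ ≤ β * ‖w - v‖) (x y : E) :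
    f y ≤ f x + ⟪f' x, y - x⟫ + β / 2 * ‖y - x‖ ^ 2 := by
  set v := y - x
  let φ : ℝ → ℝ := fun t => f (x + t • v) - t * ⟪f' x, v⟫ - β / 2 * ‖v‖ ^ 2 * t ^ 2
  have hφ : ∀ t, HasDerivAt φ (⟪f' (x + t • v), v⟫ - ⟪f' x, v⟫ - β * ‖v‖ ^ 2 * t) t := by
    intro t
    have hquad := (hasDerivAt_pow 2 t).const_mul (β / 2 * ‖v‖ ^ 2)
    refine (((hgrad (x + t • v)).hasDerivAt_comp_add_smul.sub
      ((hasDerivAt_id t).mul_const ⟪f' x, v⟫)).sub hquad).congr_deriv ?_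
    push_cast; ring
  have hφ' : ∀ t ∈ interior (Set.Ici (0 : ℝ)),
      ⟪f' (x + t • v), v⟫ - ⟪f' x, v⟫ - β * ‖v‖ ^ 2 * t ≤ 0 := by
    intro t ht
    rw [interior_Ici, Set.mem_Ioi] at ht
    calc ⟪f' (x + t • v), v⟫ - ⟪f' x, v⟫ - β * ‖v‖ ^ 2 * t
        = ⟪f' (x + t • v) - f' x, v⟫ - β * ‖v‖ ^ 2 * t := by rw [inner_sub_left]
      _ ≤ ‖f' (x + t • v) - f' x‖ * ‖v‖ - β * ‖v‖ ^ 2 * t := by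
          gcongr; exact real_inner_le_norm _ _
      _ ≤ β * ‖(x + t • v) - x‖ * ‖v‖ - β * ‖v‖ ^ 2 * t := by gcongr; exact hlip _ _
      _ = 0 := by
          rw [add_sub_cancel_left, norm_smul, Real.norm_of_nonneg ht.le]; ring
  have hanti : AntitoneOn φ (Set.Ici 0) :=
    antitoneOn_of_hasDerivWithinAt_nonpos (convex_Ici 0)
      (fun t _ => (hφ t).continuousAt.continuousWithinAt)
      (fun t _ => (hφ t).hasDerivWithinAt) hφ'
  have h01 : φ 1 ≤ φ 0 := hanti Set.self_mem_Ici (Set.mem_Ici.mpr zero_le_one) zero_le_one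
  norm_num [φ, v] at h01
  linarith

theorem le_sub_of_gradient_step (hgrad : ∀ w, HasGradientAt f (f' w) w)
    (hlip : ∀ w v, ‖f' w - f' v‖ ≤ β * ‖w - v‖) (η : ℝ) (x : E) :
    f (x - η • f' x) ≤ f x - η * (1 - β * η / 2) * ‖f' x‖ ^ 2 := by
  have h := le_add_inner_add_sq_of_lipschitz_gradient hgrad hlip x (x - η • f' x)
  rw [sub_sub_cancel_left, inner_neg_right, real_inner_smul_right, real_inner_self_eq_norm_sq,
    norm_neg, norm_smul, mul_pow, Real.norm_eq_abs, sq_abs] at h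
  linarith

theorem le_sub_of_sam_step (hgrad : ∀ w, HasGradientAt f (f' w) w)
    (hlip : ∀ w v, ‖f' w - f' v‖ ≤ β * ‖w - v‖) {η ρ : ℝ} (hβ : 0 ≤ β) (hη : 0 ≤ η)
    (hρ : 0 ≤ ρ) (hβη : β * η ≤ 1) (hβρ : β * ρ ≤ 2) (x : E) :
    f (x - η • f' (x + ρ • f' x)) ≤ f x - η * (1 - β * η / 2 - β * ρ) * ‖f' x‖ ^ 2 := by
  set a := f' x
  set e := f' (x + ρ • a) - a
  have he : ‖e‖ ≤ β * ρ * ‖a‖ := by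
    have h := hlip (x + ρ • a) x
    rwa [add_sub_cancel_left, norm_smul, Real.norm_of_nonneg hρ, ← mul_assoc] at h
  have hae : -(β * ρ * ‖a‖ ^ 2) ≤ ⟪a, e⟫ := by
    have h := neg_le_of_abs_le (abs_real_inner_le_norm a e)
    nlinarith [norm_nonneg a]
  have he2 : ‖e‖ ^ 2 ≤ β ^ 2 * ρ ^ 2 * ‖a‖ ^ 2 := by
    nlinarith [pow_le_pow_left₀ (norm_nonneg e) he 2]
  have h := le_add_inner_add_sq_of_lipschitz_gradient hgrad hlip x (x - η • (a + e))
  rw [sub_sub_cancel_left, inner_neg_right, real_inner_smul_right, inner_add_right,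
    real_inner_self_eq_norm_sq, norm_neg, norm_smul, mul_pow, Real.norm_eq_abs, sq_abs,
    norm_add_sq_real, add_sub_cancel] at h
  -- The cross term costs at most `βρ‖a‖²` and the curvature term `β³η²ρ²‖a‖²/2 ≤ β²η²ρ‖a‖²`.
  nlinarith [mul_le_mul_of_nonneg_left hae (mul_nonneg hη (sub_nonneg.mpr hβη)),
    mul_le_mul_of_nonneg_left he2 (by positivity : 0 ≤ β * η ^ 2 / 2),
    mul_nonneg (mul_nonneg (mul_nonneg (sq_nonneg (β * η)) hρ) (sq_nonneg ‖a‖))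
      (by linarith : 0 ≤ 1 - β * ρ / 2)]

theorem le_sub_of_mixed_step (hgrad : ∀ w, HasGradientAt f (f' w) w)
    (hlip : ∀ w v, ‖f' w - f' v‖ ≤ β * ‖w - v‖) {η ρ ξ : ℝ} (hβ : 0 ≤ β) (hη : 0 ≤ η)
    (hρ : 0 ≤ ρ) (hβη : β * η ≤ 1) (hβρ : β * ρ ≤ 2) (hξ : ξ = 0 ∨ ξ = 1) (x : E) :
    f (x - η • ((1 - ξ) • f' x + ξ • f' (x + ρ • f' x)))
      ≤ f x - η * (1 - β * η / 2 - β * ρ * ξ) * ‖f' x‖ ^ 2 := by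
  rcases hξ with rfl | rfl
  · simpa using le_sub_of_gradient_step hgrad hlip η x
  · simpa using le_sub_of_sam_step hgrad hlip hβ hη hρ hβη hβρ x

end Smooth

theorem inf'_le_div_sum_of_mul_le_sub {u a c : ℕ → ℝ} {T : ℕ} (hT : (range T).Nonempty)
    (hc : ∀ t ∈ range T, 0 < c t) (hstep : ∀ t ∈ range T, c t * a t ≤ u t - u (t + 1)) :
    (range T).inf' hT a ≤ (u 0 - u T) / ∑ t ∈ range T, c t := by
  rw [le_div_iff₀ (sum_pos hc hT), mul_sum, ← sum_range_sub' u T]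
  refine sum_le_sum fun t ht => ?_
  calc (range T).inf' hT a * c t ≤ a t * c t := by gcongr; exacts [(hc t ht).le, inf'_le a ht]
    _ ≤ u t - u (t + 1) := by rw [mul_comm]; exact hstep t ht

/-- Convergence of mixed SAM/ERM full-batch gradient descent. -/
theorem mixed_sam_erm_full_batch_convergence
    {d : ℕ} (f : EuclideanSpace ℝ (Fin d) → ℝ)
    (f' : EuclideanSpace ℝ (Fin d) → EuclideanSpace ℝ (Fin d))
    (hgrad : ∀ w, HasGradientAt f (f' w) w)
    (β η ρ : ℝ) (hβ : 0 < β) (hη : 0 < η) (hρ : 0 < ρ)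
    (hηβ : η < 1 / β) (hρβ : ρ < 1 / (2 * β))
    (hlip : ∀ w v, ‖f' w - f' v‖ ≤ β * ‖w - v‖)
    (w : ℕ → EuclideanSpace ℝ (Fin d)) (ξ : ℕ → ℝ)
    (hξ : ∀ t, ξ t = 0 ∨ ξ t = 1)
    (hupd : ∀ t, w (t + 1) =
      w t - η • ((1 - ξ t) • f' (w t) + ξ t • f' (w t + ρ • f' (w t))))
    (T : ℕ) (hT : 0 < T) :
    (range T).inf' (nonempty_range_iff.mpr hT.ne') (fun t => ‖f' (w t)‖ ^ 2)
      ≤ (f (w 0) - f (w T)) /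
        (T * η * (1 - β * η / 2 - β * ρ * ((∑ t ∈ range T, ξ t) / T))) := by
  have hβη : β * η < 1 := by rwa [lt_div_iff₀ hβ, mul_comm] at hηβ
  have hβρ : β * ρ < 1 / 2 := by
    rw [lt_div_iff₀ (by positivity)] at hρβ; linarith
  have hrate : ∀ t, 0 < η * (1 - β * η / 2 - β * ρ * ξ t) := fun t => by
    rcases hξ t with h | h <;> rw [h] <;> nlinarith
  have hdenom : T * η * (1 - β * η / 2 - β * ρ * ((∑ t ∈ range T, ξ t) / T))
      = ∑ t ∈ range T, η * (1 - β * η / 2 - β * ρ * ξ t) := by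
    simp only [← mul_sum, sum_sub_distrib, sum_const, card_range, nsmul_eq_mul]
    field_simp
  rw [hdenom]
  refine inf'_le_div_sum_of_mul_le_sub (u := fun t => f (w t)) _ (fun t _ => hrate t)
    fun t _ => ?_
  have hstep :=
    le_sub_of_mixed_step hgrad hlip hβ.le hη.le hρ.le hβη.le (by linarith) (hξ t) (w t)
  rw [hupd t]
  linarith
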